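/- arXiv:1903.06134 — 6 statements merged into one kernel-verified Lean document; each statement's English description precedes it below -/
import Mathlib

section
/- Let G=(M,E) be a finite tree with |M| ≥ 2 and nonnegative edge weights w. Suppose R : M → ℝ is feasible. Then for every edge e₀ ∈ E one has Σ_{j∈M} R_j ≥ Σ_{e∈E} w_e − w_{e₀}; consequently Σ_{j∈M} R_j ≥ Σ_{e∈E} w_e − min_{e∈E} w_e. -/
open scoped Classical

open Finset

lemma Finset.sum_sub_eq_sum_inside_add_sum_inside_compl {V M : Type*} [Fintype V]
    [AddCommGroup M] {F : Finset (Sym2 V)} (B : Finset V) (w : Sym2 V → M) {e₀ : Sym2 V}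
    (he₀ : e₀ ∈ F) (hcross : ¬ (∀ v ∈ e₀, v ∈ B) ∧ ¬ ∀ v ∈ e₀, v ∈ Bᶜ)
    (hF : ∀ e ∈ F, e ≠ e₀ → (∀ v ∈ e, v ∈ B) ∨ ∀ v ∈ e, v ∈ Bᶜ) :
    ∑ e ∈ F, w e - w e₀ =
      ∑ e ∈ F.filter (fun e => ∀ v ∈ e, v ∈ B), w e +
        ∑ e ∈ F.filter (fun e => ∀ v ∈ e, v ∈ Bᶜ), w e := by
  have hdisj :
      Disjoint (F.filter fun e => ∀ v ∈ e, v ∈ B) (F.filter fun e => ∀ v ∈ e, v ∈ Bᶜ) := by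
    refine disjoint_filter.mpr fun e _ hB hBc => ?_
    exact mem_compl.mp (hBc _ (Sym2.out_fst_mem e)) (hB _ (Sym2.out_fst_mem e))
  have hsplit : (F.filter fun e => ∀ v ∈ e, v ∈ B) ∪ (F.filter fun e => ∀ v ∈ e, v ∈ Bᶜ) =
      F.erase e₀ := by
    ext e
    simp only [mem_union, mem_filter, mem_erase]
    by_cases he : e = e₀
    · subst he; tauto
    · have := hF e; tauto
  rw [← sum_union hdisj, hsplit, sum_erase_eq_sub he₀]

namespace SimpleGraph

variable {V : Type*} {G : SimpleGraph V}

lemma reachable_deleteEdges_iff_of_adj {e : Sym2 V} {x u v : V} (huv : G.Adj u v)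
    (hne : s(u, v) ≠ e) :
    (G.deleteEdges {e}).Reachable x u ↔ (G.deleteEdges {e}).Reachable x v := by
  have hadj : (G.deleteEdges {e}).Adj u v := (deleteEdges_adj ..).mpr ⟨huv, hne⟩
  exact ⟨fun h => h.trans hadj.reachable, fun h => h.trans hadj.symm.reachable⟩

/-- The component `B` of `a` after deleting the bridge is a proper nonempty subset and the bridge
is the only edge between `B` and `Bᶜ`; add the feasibility bounds for `B` and `Bᶜ`. -/
theorem sum_sub_le_sum_of_isBridge [Fintype V] (w : Sym2 V → ℝ) (R : V → ℝ)
    (hfeas : ∀ B : Finset V, B ⊂ Finset.univ →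
      ∑ e ∈ G.edgeFinset.filter (fun e => ∀ v ∈ e, v ∈ B), w e ≤ ∑ j ∈ B, R j)
    {a b : V} (hab : G.Adj a b) (hbridge : G.IsBridge s(a, b)) :
    ∑ e ∈ G.edgeFinset, w e - w s(a, b) ≤ ∑ j, R j := by
  set B : Finset V := univ.filter fun v => (G.deleteEdges {s(a, b)}).Reachable a v
  have ha : a ∈ B := by simp [B]
  have hb : b ∉ B := by simpa [B] using isBridge_iff.mp hbridge
  have hside : ∀ e ∈ G.edgeFinset, e ≠ s(a, b) → (∀ v ∈ e, v ∈ B) ∨ ∀ v ∈ e, v ∈ Bᶜ := by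
    intro e he hne
    induction e using Sym2.ind with
    | _ u v =>
    have hiff := reachable_deleteEdges_iff_of_adj (x := a) (mem_edgeFinset.mp he) hne
    by_cases hu : u ∈ B <;> simp_all [B]
  rw [sum_sub_eq_sum_inside_add_sum_inside_compl B w (mem_edgeFinset.mpr hab)
    (by simp [ha, hb]) hside]
  calc _ ≤ ∑ j ∈ B, R j + ∑ j ∈ Bᶜ, R j :=
        add_le_add (hfeas B (ssubset_univ_iff.mpr fun h => hb (h ▸ mem_univ b)))
          (hfeas Bᶜ (ssubset_univ_iff.mpr fun h => mem_compl.mp (h ▸ mem_univ a) ha))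
    _ = ∑ j, R j := sum_add_sum_compl B R

end SimpleGraph

open SimpleGraph

theorem stmt_0_general {V : Type*} [Fintype V] (G : SimpleGraph V) (hT : G.IsTree)
    (hcard : 2 ≤ Fintype.card V)
    (w : Sym2 V → ℝ)
    (R : V → ℝ)
    (hfeas : ∀ B : Finset V, B ⊂ Finset.univ →
      ∑ e ∈ G.edgeFinset.filter (fun e => ∀ v ∈ e, v ∈ B), w e ≤ ∑ j ∈ B, R j) :
    (∀ e₀ ∈ G.edgeFinset, (∑ e ∈ G.edgeFinset, w e) - w e₀ ≤ ∑ j, R j) ∧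
    (∑ e ∈ G.edgeFinset, w e) - sInf (w '' G.edgeSet) ≤ ∑ j, R j := by
  have hedge : ∀ e₀ ∈ G.edgeFinset, (∑ e ∈ G.edgeFinset, w e) - w e₀ ≤ ∑ j, R j := by
    intro e₀ he₀
    induction e₀ using Sym2.ind with
    | _ a b =>
    have hab : G.Adj a b := mem_edgeFinset.mp he₀
    exact sum_sub_le_sum_of_isBridge w R hfeas hab
      (isAcyclic_iff_forall_adj_isBridge.mp hT.isAcyclic hab)
  refine ⟨hedge, ?_⟩
  have : Nontrivial V := Fintype.one_lt_card_iff_nontrivial.mp hcard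
  have hne : G.edgeSet.Nonempty :=
    edgeSet_nonempty.mpr fun hbot => not_connected_bot (hbot ▸ hT.connected)
  obtain ⟨e₀, he₀, hmin⟩ := (hne.image w).csInf_mem ((Set.toFinite G.edgeSet).image w)
  rw [← hmin]
  exact hedge e₀ (mem_edgeFinset.mpr he₀)

/-- Let `G = (M, E)` be a finite tree with `|M| ≥ 2` and nonnegative edge
weights `w`.  Suppose `R : M → ℝ` is feasible, i.e. `R` is nonnegative and for every proper
subset `B ⊊ M` the sum of `R` over `B` is at least the total weight of the edges inside `B`.
Then for every edge `e₀ ∈ E` one has `∑_{j ∈ M} R j ≥ ∑_{e ∈ E} w e − w e₀`; consequently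
`∑_{j ∈ M} R j ≥ ∑_{e ∈ E} w e − min_{e ∈ E} w e`. -/
theorem stmt_0 {V : Type*} [Fintype V] (G : SimpleGraph V) (hT : G.IsTree)
    (hcard : 2 ≤ Fintype.card V)
    (w : Sym2 V → ℝ) (hw : ∀ e ∈ G.edgeFinset, 0 ≤ w e)
    (R : V → ℝ) (hR0 : ∀ j, 0 ≤ R j)
    (hfeas : ∀ B : Finset V, B ⊂ Finset.univ →
      ∑ e ∈ G.edgeFinset.filter (fun e => ∀ v ∈ e, v ∈ B), w e ≤ ∑ j ∈ B, R j) :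
    (∀ e₀ ∈ G.edgeFinset, (∑ e ∈ G.edgeFinset, w e) - w e₀ ≤ ∑ j, R j) ∧
    (∑ e ∈ G.edgeFinset, w e) - sInf (w '' G.edgeSet) ≤ ∑ j, R j :=
  stmt_0_general G hT hcard w R hfeas
end

section
/- Let G=(M,E) be a finite tree with |M| ≥ 2 and nonnegative edge weights w. Fix an edge e* = {i*, j*} ∈ E with minimal weight, i.e., w_{e*} ≤ w_e for all e ∈ E. For each vertex j ∈ M define R_j = Σ of w_{{i,j}} over all neighbors i of j such that {i,j} ≠ e* and d(j,i*) < d(i,i*). Then R is feasible: R_j ≥ 0 for every j ∈ M and for every proper subset B ⊊ M, Σ_{j∈B} R_j ≥ Σ_{e inside B} w_e. -/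
open SimpleGraph

private lemma path_len' {V : Type*} {G : SimpleGraph V} (hT : G.IsTree) {u v : V}
    (p : G.Walk u v) (hp : p.IsPath) : p.length = G.dist u v := by
  classical
  obtain ⟨q, hq⟩ := (hT.isConnected u v).exists_walk_length_eq_dist
  have h1 : q.toPath = (⟨p, hp⟩ : G.Path u v) := hT.IsAcyclic.path_unique _ _
  have h2 : (q.toPath : G.Walk u v).length ≤ q.length := Walk.length_bypass_le q
  have h3 := G.dist_le p
  rw [h1] at h2
  have h4 : ((⟨p, hp⟩ : G.Path u v) : G.Walk u v).length = p.length := rfl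
  omega

private lemma adj_dist' {V : Type*} {G : SimpleGraph V} (hT : G.IsTree) {a b : V}
    (hab : G.Adj a b) (x : V) :
    G.dist b x = G.dist a x + 1 ∨ G.dist a x = G.dist b x + 1 := by
  classical
  obtain ⟨q, hq⟩ := (hT.isConnected a x).exists_walk_length_eq_dist
  set p : G.Walk a x := (q.toPath : G.Walk a x) with hpdef
  have hp : p.IsPath := q.toPath.isPath
  have hplen : p.length = G.dist a x := path_len' hT p hp
  by_cases hb : b ∈ p.support
  · right
    have ht := hp.takeUntil hb
    have hd := hp.dropUntil hb
    have hsum : (p.takeUntil b hb).length + (p.dropUntil b hb).length = p.length := by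
      rw [← Walk.length_append, Walk.take_spec]
    have h1 : (p.takeUntil b hb).length = G.dist a b := path_len' hT _ ht
    have h2 : (p.dropUntil b hb).length = G.dist b x := path_len' hT _ hd
    have hab1 : G.dist a b = 1 := (SimpleGraph.dist_eq_one_iff_adj).2 hab
    omega
  · left
    have hc : (Walk.cons hab.symm p).IsPath := hp.cons hb
    have := path_len' hT _ hc
    rw [Walk.length_cons, hplen] at this
    omega

private lemma exists_closer' {V : Type*} {G : SimpleGraph V} (hT : G.IsTree) {v x : V}
    (hvx : v ≠ x) : ∃ u, G.Adj v u ∧ G.dist u x + 1 = G.dist v x := by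
  obtain ⟨q, hq⟩ := (hT.isConnected v x).exists_walk_length_eq_dist
  cases q with
  | nil => exact absurd rfl hvx
  | cons h q' =>
    rename_i u
    refine ⟨u, h, ?_⟩
    have h1 : G.dist u x ≤ q'.length := G.dist_le q'
    have h2 : G.dist v x ≤ G.dist u x + 1 := by
      have := SimpleGraph.Connected.dist_triangle hT.isConnected (u := v) (v := u) (w := x)
      have := (SimpleGraph.dist_eq_one_iff_adj).2 h
      omega
    rw [Walk.length_cons] at hq
    omega

private lemma exists_cross' {V : Type*} {G : SimpleGraph V} (hT : G.IsTree) {B : Finset V}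
    {x : V} (hx : x ∈ B) : ∀ v, v ∉ B → ∃ a b, a ∉ B ∧ b ∈ B ∧ G.Adj a b ∧
      G.dist b x < G.dist a x := by
  suffices h : ∀ n v, v ∉ B → G.dist v x ≤ n → ∃ a b, a ∉ B ∧ b ∈ B ∧ G.Adj a b ∧
      G.dist b x < G.dist a x by
    intro v hv; exact h (G.dist v x) v hv le_rfl
  intro n
  induction n with
  | zero =>
    intro v hv hd
    have : v = x := (hT.isConnected.dist_eq_zero_iff (u := v) (v := x)).1 (by omega)
    exact absurd (this ▸ hx) hv
  | succ n ih =>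
    intro v hv hd
    have hvx : v ≠ x := fun h => hv (h ▸ hx)
    obtain ⟨u, hadj, hu⟩ := exists_closer' hT hvx
    by_cases hu2 : u ∈ B
    · exact ⟨v, u, hv, hu2, hadj, by omega⟩
    · exact ih u hu2 (by omega)



open scoped Classical

/-- Let `G = (M, E)` be a finite tree with `|M| ≥ 2` and nonnegative edge
weights `w`.  Fix an edge `e* = {i*, j*} ∈ E` of minimal weight.  For each vertex `j ∈ M`
define `R j = ∑` of `w {i, j}` over all neighbors `i` of `j` such that `{i, j} ≠ e*` and
`d(j, i*) < d(i, i*)`.  Then `R` is feasible: `R j ≥ 0` for every `j ∈ M`, and for every proper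
subset `B ⊊ M`, `∑_{j ∈ B} R j ≥ ∑_{e inside B} w e`. -/
theorem stmt_2 {V : Type*} [Fintype V] (G : SimpleGraph V) (hT : G.IsTree)
    (hcard : 2 ≤ Fintype.card V)
    (w : Sym2 V → ℝ) (hw : ∀ e ∈ G.edgeFinset, 0 ≤ w e)
    (istar jstar : V) (hstar : G.Adj istar jstar)
    (hmin : ∀ e ∈ G.edgeFinset, w s(istar, jstar) ≤ w e)
    (R : V → ℝ)
    (hR : ∀ j, R j = ∑ i ∈ (G.neighborFinset j).filter
        (fun i => s(i, j) ≠ s(istar, jstar) ∧ G.dist j istar < G.dist i istar), w s(i, j)) :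
    (∀ j, 0 ≤ R j) ∧
    (∀ B : Finset V, B ⊂ Finset.univ →
      ∑ e ∈ G.edgeFinset.filter (fun e => ∀ v ∈ e, v ∈ B), w e ≤ ∑ j ∈ B, R j) := by
  classical
  set estar : Sym2 V := s(istar, jstar) with hestardef
  have hestar : estar ∈ G.edgeFinset := by
    rw [SimpleGraph.mem_edgeFinset]; exact hstar
  set A : V → Finset (Sym2 V) := fun j => ((G.neighborFinset j).filter
      (fun i => s(i, j) ≠ estar ∧ G.dist j istar < G.dist i istar)).image
        (fun i => s(i, j)) with hAdef
  -- characterize membership in A j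
  have hAmem : ∀ j e, e ∈ A j ↔ ∃ i, G.Adj j i ∧ s(i, j) ≠ estar ∧
      G.dist j istar < G.dist i istar ∧ e = s(i, j) := by
    intro j e
    simp only [hAdef, Finset.mem_image, Finset.mem_filter, SimpleGraph.mem_neighborFinset]
    constructor
    · rintro ⟨i, ⟨hadj, h1, h2⟩, rfl⟩; exact ⟨i, hadj, h1, h2, rfl⟩
    · rintro ⟨i, hadj, h1, h2, rfl⟩; exact ⟨i, ⟨hadj, h1, h2⟩, rfl⟩
  have hRA : ∀ j, R j = ∑ e ∈ A j, w e := by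
    intro j
    rw [hR j]
    refine (Finset.sum_image ?_).symm
    intro a _ b _ hab
    rcases Sym2.eq_iff.1 hab with ⟨h1, _⟩ | ⟨h1, h2⟩
    · exact h1
    · exact h1.trans h2
  have hAsub : ∀ j, A j ⊆ G.edgeFinset := by
    intro j e he
    obtain ⟨i, hadj, _, _, rfl⟩ := (hAmem j e).1 he
    rw [SimpleGraph.mem_edgeFinset]
    exact hadj.symm
  have hRnn : ∀ j, 0 ≤ R j := by
    intro j
    rw [hRA j]
    exact Finset.sum_nonneg fun e he => hw e (hAsub j he)
  refine ⟨hRnn, ?_⟩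
  intro B hB
  -- pairwise disjointness
  have hdisj : (B : Set V).PairwiseDisjoint A := by
    intro j1 _ j2 _ hne
    change Disjoint (A j1) (A j2)
    rw [Finset.disjoint_left]
    intro e h1 h2
    obtain ⟨i1, _, _, hlt1, he1⟩ := (hAmem j1 e).1 h1
    obtain ⟨i2, _, _, hlt2, he2⟩ := (hAmem j2 e).1 h2
    rw [he1] at he2
    rcases Sym2.eq_iff.1 he2 with ⟨ha, hb⟩ | ⟨ha, hb⟩
    · exact hne hb
    · rw [ha, hb] at hlt1
      omega
  set U : Finset (Sym2 V) := B.biUnion A with hUdef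
  have hUsub : U ⊆ G.edgeFinset := by
    intro e he
    obtain ⟨j, _, hej⟩ := Finset.mem_biUnion.1 he
    exact hAsub j hej
  have hsumU : ∑ j ∈ B, R j = ∑ e ∈ U, w e := by
    rw [Finset.sum_congr rfl fun j _ => hRA j]
    exact (Finset.sum_biUnion hdisj).symm
  set Inner : Finset (Sym2 V) := G.edgeFinset.filter (fun e => ∀ v ∈ e, v ∈ B)
    with hInnerdef
  have hInnerSub : ∀ e ∈ Inner, e ≠ estar → e ∈ U := by
    intro e he hne
    rw [hInnerdef, Finset.mem_filter] at he
    obtain ⟨heE, hvB⟩ := he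
    induction e using Sym2.ind with
    | _ a b =>
      have hadj : G.Adj a b := by rwa [SimpleGraph.mem_edgeFinset, SimpleGraph.mem_edgeSet] at heE
      have haB : a ∈ B := hvB a (Sym2.mem_mk_left a b)
      have hbB : b ∈ B := hvB b (Sym2.mem_mk_right a b)
      rcases adj_dist' hT hadj istar with h | h
      · -- dist a < dist b : edge belongs to A a, written as s(b, a)
        refine Finset.mem_biUnion.2 ⟨a, haB, (hAmem a _).2 ⟨b, hadj, ?_, by omega, Sym2.eq_swap⟩⟩
        intro h; exact hne (Eq.trans Sym2.eq_swap h)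
      · -- dist b < dist a : edge belongs to A b
        exact Finset.mem_biUnion.2 ⟨b, hbB, (hAmem b _).2 ⟨a, hadj.symm, hne, by omega, rfl⟩⟩
  rw [hsumU]
  by_cases hin : istar ∈ B ∧ jstar ∈ B
  · -- e* is inside B : need the crossing edge
    obtain ⟨v, -, hv⟩ := Finset.exists_of_ssubset hB
    obtain ⟨a, b, ha, hb, hadj, hlt⟩ := exists_cross' hT hin.1 v hv
    set e' : Sym2 V := s(a, b) with he'def
    have he'ne : e' ≠ estar := by
      intro h
      rcases Sym2.eq_iff.1 h with ⟨h1, _⟩ | ⟨h1, _⟩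
      · exact ha (h1 ▸ hin.1)
      · exact ha (h1 ▸ hin.2)
    have he'U : e' ∈ U :=
      Finset.mem_biUnion.2 ⟨b, hb, (hAmem b _).2 ⟨a, hadj.symm, he'ne, hlt, rfl⟩⟩
    have he'E : e' ∈ G.edgeFinset := hUsub he'U
    have he'not : e' ∉ Inner := by
      rw [hInnerdef, Finset.mem_filter]
      rintro ⟨-, hall⟩
      exact ha (hall a (Sym2.mem_mk_left a b))
    have hestarInner : estar ∈ Inner := by
      rw [hInnerdef, Finset.mem_filter]
      refine ⟨hestar, ?_⟩
      intro x hx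
      rw [hestardef, Sym2.mem_iff] at hx
      rcases hx with rfl | rfl
      · exact hin.1
      · exact hin.2
    have he'not' : e' ∉ Inner.erase estar := fun h => he'not (Finset.mem_of_mem_erase h)
    have hsubset : insert e' (Inner.erase estar) ⊆ U := by
      intro e he
      rcases Finset.mem_insert.1 he with rfl | he
      · exact he'U
      · exact hInnerSub e (Finset.mem_of_mem_erase he) (Finset.ne_of_mem_erase he)
    calc ∑ e ∈ Inner, w e
        = w estar + ∑ e ∈ Inner.erase estar, w e :=
          (Finset.add_sum_erase _ _ hestarInner).symm
      _ ≤ w e' + ∑ e ∈ Inner.erase estar, w e := by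
          have := hmin e' he'E; linarith
      _ = ∑ e ∈ insert e' (Inner.erase estar), w e := (Finset.sum_insert he'not').symm
      _ ≤ ∑ e ∈ U, w e :=
          Finset.sum_le_sum_of_subset_of_nonneg hsubset
            (fun e he _ => hw e (hUsub he))
  · -- e* not inside B
    have hsubset : Inner ⊆ U := by
      intro e he
      refine hInnerSub e he ?_
      rintro rfl
      rw [hInnerdef, Finset.mem_filter] at he
      exact hin ⟨he.2 istar (Sym2.mem_mk_left _ _), he.2 jstar (Sym2.mem_mk_right _ _)⟩
    exact Finset.sum_le_sum_of_subset_of_nonneg hsubset (fun e he _ => hw e (hUsub he))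
end

section
/- Let G=(M,E) be a finite tree with |M| ≥ 2 and nonnegative edge weights w, and let A ⊆ M with |A| ≥ 2. Suppose R : M → ℝ is A-feasible. Then for every edge e ∈ E such that each of the two connected components of the graph obtained from G by deleting e contains a vertex of A, one has Σ_{j∈M} R_j ≥ Σ_{e'∈E} w_{e'} − w_e. -/
open scoped Classical

/-!
Deleting the edge `e = s(i, j)` of the tree splits the vertices into the side `S` of `i` and the
side `Sᶜ` of `j`, and every edge other than `e` lies inside one of the two sides. Both sides are
proper subsets missing a vertex of `A`, so feasibility bounds the weight inside each side by the
`R`-mass of that side; adding the two bounds gives the claim.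
-/

namespace SimpleGraph

variable {V : Type*} {G : SimpleGraph V}

lemma eq_of_adj_of_reachable_deleteEdges {e : Sym2 V} {i a b : V} (hab : G.Adj a b)
    (ha : (G.deleteEdges {e}).Reachable i a) (hb : ¬ (G.deleteEdges {e}).Reachable i b) :
    s(a, b) = e := by
  by_contra hne
  exact hb (ha.trans (deleteEdges_adj.2 ⟨hab, by simpa using hne⟩).reachable)

lemma sum_edgeFinset_eq_add_sum_inside_add_sum_inside_compl [Fintype V] {M : Type*}
    [AddCommMonoid M] {S : Finset V} {i j : V} (hij : G.Adj i j) (hi : i ∈ S) (hj : j ∉ S)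
    (hcross : ∀ a b, G.Adj a b → a ∈ S → b ∉ S → s(a, b) = s(i, j)) (w : Sym2 V → M) :
    ∑ e ∈ G.edgeFinset, w e = w s(i, j) +
      (∑ e ∈ G.edgeFinset.filter (fun e => ∀ v ∈ e, v ∈ S), w e +
        ∑ e ∈ G.edgeFinset.filter (fun e => ∀ v ∈ e, v ∈ Sᶜ), w e) := by
  have hsplit : G.edgeFinset.erase s(i, j) =
      G.edgeFinset.filter (fun e => ∀ v ∈ e, v ∈ S) ∪
        G.edgeFinset.filter (fun e => ∀ v ∈ e, v ∈ Sᶜ) := by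
    ext e
    induction e using Sym2.ind with
    | h a b =>
      simp only [Finset.mem_erase, mem_edgeFinset, mem_edgeSet, Finset.mem_union,
        Finset.mem_filter, Sym2.mem_iff, forall_eq_or_imp, forall_eq, Finset.mem_compl]
      constructor
      · rintro ⟨hne, hab⟩
        by_cases ha : a ∈ S <;> by_cases hb : b ∈ S
        · exact .inl ⟨hab, ha, hb⟩
        · exact absurd (hcross a b hab ha hb) hne
        · exact absurd (Sym2.eq_swap.trans (hcross b a hab.symm hb ha)) hne
        · exact .inr ⟨hab, ha, hb⟩
      · rintro (⟨hab, ha, hb⟩ | ⟨hab, ha, hb⟩) <;> refine ⟨fun h => ?_, hab⟩ <;>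
          rcases Sym2.eq_iff.1 h with ⟨rfl, rfl⟩ | ⟨rfl, rfl⟩ <;> contradiction
  have hdisj : Disjoint (G.edgeFinset.filter (fun e => ∀ v ∈ e, v ∈ S))
      (G.edgeFinset.filter (fun e => ∀ v ∈ e, v ∈ Sᶜ)) := by
    refine Finset.disjoint_filter.2 fun e _ hS hSc => ?_
    induction e using Sym2.ind with
    | h a b => exact Finset.mem_compl.1 (hSc a (Sym2.mem_mk_left a b)) (hS a (Sym2.mem_mk_left a b))
  rw [← Finset.add_sum_erase _ _ (G.mem_edgeFinset.2 (G.mem_edgeSet.2 hij)), hsplit, Finset.sum_union hdisj]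

end SimpleGraph

open SimpleGraph in
theorem stmt_4_general {V : Type*} [Fintype V] (G : SimpleGraph V) (hT : G.IsTree)
    (w : Sym2 V → ℝ)
    (A : Finset V)
    (R : V → ℝ)
    (hfeas : ∀ B : Finset V, B ⊂ Finset.univ → ¬ A ⊆ B →
      ∑ e ∈ G.edgeFinset.filter (fun e => ∀ v ∈ e, v ∈ B), w e ≤ ∑ j ∈ B, R j)
    (i j : V) (hij : G.Adj i j)
    (hi : ∃ a ∈ A, (G.deleteEdges {s(i, j)}).Reachable i a)
    (hj : ∃ a ∈ A, (G.deleteEdges {s(i, j)}).Reachable j a) :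
    (∑ e ∈ G.edgeFinset, w e) - w s(i, j) ≤ ∑ v, R v := by
  set S : Finset V := Finset.univ.filter ((G.deleteEdges {s(i, j)}).Reachable i)
  have hbridge : ¬ (G.deleteEdges {s(i, j)}).Reachable i j :=
    isAcyclic_iff_forall_adj_isBridge.1 hT.isAcyclic hij
  have hiS : i ∈ S := by simp [S]
  have hjS : j ∉ S := by simpa [S] using hbridge
  obtain ⟨a, haA, hia⟩ := hi
  obtain ⟨b, hbA, hjb⟩ := hj
  have hA_S : ¬ A ⊆ S := fun h =>
    hbridge ((show (G.deleteEdges {s(i, j)}).Reachable i b by simpa [S] using h hbA).trans hjb.symm)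
  have hA_Sc : ¬ A ⊆ Sᶜ := fun h => Finset.mem_compl.1 (h haA) (by simpa [S] using hia)
  have hS_ne : S ≠ Finset.univ := fun h => hjS (h ▸ Finset.mem_univ j)
  have hSc_ne : Sᶜ ≠ Finset.univ := fun h => Finset.mem_compl.1 (h ▸ Finset.mem_univ i) hiS
  have hcross (x y : V) (hxy : G.Adj x y) (hx : x ∈ S) (hy : y ∉ S) : s(x, y) = s(i, j) :=
    eq_of_adj_of_reachable_deleteEdges hxy (by simpa [S] using hx) (by simpa [S] using hy)
  calc (∑ e ∈ G.edgeFinset, w e) - w s(i, j)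
      = ∑ e ∈ G.edgeFinset.filter (fun e => ∀ v ∈ e, v ∈ S), w e +
          ∑ e ∈ G.edgeFinset.filter (fun e => ∀ v ∈ e, v ∈ Sᶜ), w e := by
        rw [sum_edgeFinset_eq_add_sum_inside_add_sum_inside_compl hij hiS hjS hcross,
          add_sub_cancel_left]
    _ ≤ ∑ v ∈ S, R v + ∑ v ∈ Sᶜ, R v :=
        add_le_add (hfeas S (Finset.ssubset_univ_iff.2 hS_ne) hA_S)
          (hfeas Sᶜ (Finset.ssubset_univ_iff.2 hSc_ne) hA_Sc)
    _ = ∑ v, R v := Finset.sum_add_sum_compl S R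

/-- Let `G = (M, E)` be a finite tree with `|M| ≥ 2` and nonnegative edge
weights `w`, and let `A ⊆ M` with `|A| ≥ 2`.  Suppose `R : M → ℝ` is `A`-feasible, i.e. `R` is
nonnegative and for every proper subset `B ⊊ M` with `A ⊄ B` the sum of `R` over `B` is at
least the total weight of the edges inside `B`.  Then for every edge `e = {i, j} ∈ E` such
that each of the two connected components of `G` with `e` deleted contains a vertex of `A`,
one has `∑_{j ∈ M} R j ≥ ∑_{e' ∈ E} w e' − w e`. -/
theorem stmt_4 {V : Type*} [Fintype V] (G : SimpleGraph V) (hT : G.IsTree)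
    (hcard : 2 ≤ Fintype.card V)
    (w : Sym2 V → ℝ) (hw : ∀ e ∈ G.edgeFinset, 0 ≤ w e)
    (A : Finset V) (hA : 2 ≤ A.card)
    (R : V → ℝ) (hR0 : ∀ j, 0 ≤ R j)
    (hfeas : ∀ B : Finset V, B ⊂ Finset.univ → ¬ A ⊆ B →
      ∑ e ∈ G.edgeFinset.filter (fun e => ∀ v ∈ e, v ∈ B), w e ≤ ∑ j ∈ B, R j)
    (i j : V) (hij : G.Adj i j)
    (hi : ∃ a ∈ A, (G.deleteEdges {s(i, j)}).Reachable i a)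
    (hj : ∃ a ∈ A, (G.deleteEdges {s(i, j)}).Reachable j a) :
    (∑ e ∈ G.edgeFinset, w e) - w s(i, j) ≤ ∑ v, R v :=
  stmt_4_general G hT w A R hfeas i j hij hi hj
end

section
/- Let G=(M,E) be a finite tree with |M| ≥ 2 and nonnegative edge weights w, let A ⊆ M with |A| ≥ 2, and let E_A be the set of edges e ∈ E such that each of the two connected components of G with e deleted contains a vertex of A. Then the minimum of Σ_{j∈M} R_j over all A-feasible vectors R equals Σ_{e∈E} w_e − min_{e∈E_A} w_e; that is, every A-feasible R satisfies Σ_{j∈M} R_j ≥ Σ_{e∈E} w_e − min_{e∈E_A} w_e, and there exists an A-feasible R attaining this value. -/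
/-!
Let `e = rs` be an edge of `E_A` of least weight. Deleting `e` splits the tree into two sides,
neither of which contains `A`; the feasibility inequalities for these two sides add up to
`∑ R ≥ ∑ w - w e`, since every edge other than `e` lies inside one of them.

For the matching vector, charge every edge other than `e` to its endpoint nearer to `r`. A set
`B` missing some `a ∈ A` is charged every edge inside it except possibly `e`. If `e` is inside
`B`, the path from `a` to `r` enters `B` through an edge `xy` charged to `y ∈ B`; both sides of
`xy` meet `A`, so `w xy ≥ w e` pays for `e`.
-/

open scoped Classical

open Finset

lemma Finset.sum_le_sum_of_erase_subset {ι M : Type*} [AddCommMonoid M] [PartialOrder M]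
    [IsOrderedAddMonoid M] [DecidableEq ι] {s t : Finset ι} {f : ι → M} {a : ι}
    (hst : s.erase a ⊆ t) (ht : ∀ i ∈ t, 0 ≤ f i) (ha : a ∈ s → ∃ b ∈ t, b ∉ s ∧ f a ≤ f b) :
    ∑ i ∈ s, f i ≤ ∑ i ∈ t, f i := by
  by_cases has : a ∈ s
  · obtain ⟨b, hbt, hbs, hab⟩ := ha has
    calc ∑ i ∈ s, f i = f a + ∑ i ∈ s.erase a, f i := (add_sum_erase _ _ has).symm
      _ ≤ f b + ∑ i ∈ s.erase a, f i := by gcongr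
      _ = ∑ i ∈ insert b (s.erase a), f i :=
        (sum_insert fun h => hbs (mem_of_mem_erase h)).symm
      _ ≤ ∑ i ∈ t, f i :=
        sum_le_sum_of_subset_of_nonneg (insert_subset hbt hst) fun i hi _ => ht i hi
  · rw [← erase_eq_of_notMem has]
    exact sum_le_sum_of_subset_of_nonneg hst fun i hi _ => ht i hi

namespace SimpleGraph

variable {V : Type*} {G : SimpleGraph V}

def separatingEdges (G : SimpleGraph V) (A : Finset V) : Set (Sym2 V) :=
  {e | e ∈ G.edgeSet ∧ ∀ v ∈ e, ∃ a ∈ A, (G.deleteEdges {e}).Reachable v a}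

lemma mem_separatingEdges_mk {A : Finset V} {x y : V} :
    s(x, y) ∈ G.separatingEdges A ↔ G.Adj x y ∧
      (∃ a ∈ A, (G.deleteEdges {s(x, y)}).Reachable x a) ∧
      ∃ b ∈ A, (G.deleteEdges {s(x, y)}).Reachable y b := by
  simp [separatingEdges]

noncomputable def edgesInside [Fintype V] (G : SimpleGraph V) (B : Finset V) : Finset (Sym2 V) :=
  G.edgeFinset.filter fun e => ∀ v ∈ e, v ∈ B

lemma Preconnected.reachable_deleteEdges_or (hG : G.Preconnected) (v x y : V) :
    (G.deleteEdges {s(x, y)}).Reachable v x ∨ (G.deleteEdges {s(x, y)}).Reachable v y := by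
  suffices ∀ {u t} (p : G.Walk u t), t = x →
      (G.deleteEdges {s(x, y)}).Reachable u x ∨ (G.deleteEdges {s(x, y)}).Reachable u y from
    this (hG v x).some rfl
  intro u t p ht
  induction p with
  | nil => exact .inl (ht ▸ .rfl)
  | @cons u c _ h p ih =>
    by_cases he : s(u, c) = s(x, y)
    · rcases Sym2.eq_iff.mp he with ⟨rfl, -⟩ | ⟨rfl, -⟩
      · exact .inl .rfl
      · exact .inr .rfl
    · have hadj : (G.deleteEdges {s(x, y)}).Adj u c :=
        deleteEdges_adj.mpr ⟨h, by simpa using he⟩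
      exact (ih ht).imp hadj.reachable.trans hadj.reachable.trans

lemma Preconnected.exists_mem_reachable_deleteEdges (hG : G.Preconnected) (r : V)
    (e : Sym2 V) : ∃ v ∈ e, (G.deleteEdges {e}).Reachable v r := by
  induction e using Sym2.ind with
  | _ x y =>
    rcases hG.reachable_deleteEdges_or r x y with h | h
    · exact ⟨x, Sym2.mem_mk_left x y, h.symm⟩
    · exact ⟨y, Sym2.mem_mk_right x y, h.symm⟩

lemma Reachable.reachable_of_not_reachable_deleteEdges {u v x y : V} (h : G.Reachable u v)
    (h' : ¬ (G.deleteEdges {s(x, y)}).Reachable u v) : G.Reachable u x := by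
  classical
  obtain ⟨p⟩ := h
  exact ⟨p.takeUntil x
    (p.fst_mem_support_of_mem_edges (p.mem_edges_of_not_reachable_deleteEdges h'))⟩

lemma Walk.IsTrail.exists_crossing_edge {B : Set V} {a r : V} {p : G.Walk a r}
    (hp : p.IsTrail) (ha : a ∉ B) (hr : r ∈ B) :
    ∃ x y, G.Adj x y ∧ x ∉ B ∧ y ∈ B ∧
      (G.deleteEdges {s(x, y)}).Reachable x a ∧ (G.deleteEdges {s(x, y)}).Reachable y r := by
  induction p with
  | nil => exact absurd hr ha
  | @cons u c _ h p ih =>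
    rw [Walk.isTrail_cons] at hp
    by_cases hc : c ∈ B
    · exact ⟨u, c, h, ha, hc, .rfl, (p.toDeleteEdge _ hp.2).reachable⟩
    · obtain ⟨x, y, hxy, hxB, hyB, hxa, hyr⟩ := ih hp.1 hc hr
      have hne : s(u, c) ≠ s(x, y) := by
        rintro hh
        rcases Sym2.eq_iff.mp hh with ⟨-, rfl⟩ | ⟨rfl, -⟩
        · exact hc hyB
        · exact ha hyB
      have hadj : (G.deleteEdges {s(x, y)}).Adj u c :=
        deleteEdges_adj.mpr ⟨h, by simpa using hne⟩
      exact ⟨x, y, hxy, hxB, hyB, hxa.trans hadj.symm.reachable, hyr⟩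

/-- If `a` and `b` were both on `x`'s side of the bridge `xy`, a walk between them avoiding `xy`
would have to pass through `rs`, putting `r` on `x`'s side as well. -/
lemma IsBridge.reachable_deleteEdges_or_of_reachable (hG : G.Preconnected) {x y r s a b : V}
    (hxy : G.IsBridge s(x, y)) (hyr : (G.deleteEdges {s(x, y)}).Reachable y r)
    (hab : ¬ (G.deleteEdges {s(r, s)}).Reachable a b) :
    (G.deleteEdges {s(x, y)}).Reachable y a ∨ (G.deleteEdges {s(x, y)}).Reachable y b := by
  by_contra! hy
  have hax := (hG.reachable_deleteEdges_or a x y).resolve_right fun h => hy.1 h.symm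
  have hbx := (hG.reachable_deleteEdges_or b x y).resolve_right fun h => hy.2 h.symm
  have har := (hax.trans hbx.symm).reachable_of_not_reachable_deleteEdges
    fun h => hab (h.mono (deleteEdges_mono (deleteEdges_le _)))
  exact hxy (hax.symm.trans (har.trans hyr.symm))

lemma IsAcyclic.eq_of_mem_of_reachable_deleteEdges (hG : G.IsAcyclic) {x y v r : V}
    (hxy : G.Adj x y) (hv : v ∈ s(x, y)) (hvr : (G.deleteEdges {s(x, y)}).Reachable v r)
    (hyr : (G.deleteEdges {s(x, y)}).Reachable y r) : v = y := by
  rcases Sym2.mem_iff.mp hv with rfl | rfl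
  · exact absurd (hvr.trans hyr.symm) (isAcyclic_iff_forall_adj_isBridge.mp hG hxy)
  · rfl

lemma IsBridge.sum_edgesInside_add_sum_edgesInside_compl [Fintype V] {M : Type*}
    [AddCommGroup M] {r s : V} (hadj : G.Adj r s) (hbr : G.IsBridge s(r, s)) {B : Finset V}
    (hB : ∀ v, v ∈ B ↔ (G.deleteEdges {s(r, s)}).Reachable v r) (w : Sym2 V → M) :
    ∑ e ∈ G.edgesInside B, w e + ∑ e ∈ G.edgesInside Bᶜ, w e =
      ∑ e ∈ G.edgeFinset, w e - w s(r, s) := by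
  have hsB : s ∉ B := fun h => hbr ((hB s).mp h).symm
  have hrB : r ∈ B := (hB r).mpr .rfl
  have hsame : ∀ {u v}, G.Adj u v → s(u, v) ≠ s(r, s) → (u ∈ B ↔ v ∈ B) := by
    intro u v h hne
    have hadj : (G.deleteEdges {s(r, s)}).Adj u v := deleteEdges_adj.mpr ⟨h, by simpa using hne⟩
    rw [hB, hB]
    exact ⟨hadj.symm.reachable.trans, hadj.reachable.trans⟩
  have hcompl : G.edgeFinset.filter (fun e => ¬ ∀ v ∈ e, v ∈ B) =
      insert s(r, s) (G.edgesInside Bᶜ) := by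
    ext e
    induction e using Sym2.ind with
    | _ u v =>
      by_cases he : s(u, v) = s(r, s)
      · rw [he]
        simp [hadj, hsB]
      · simp only [edgesInside, mem_filter, mem_insert, mem_edgeFinset, mem_edgeSet,
          Sym2.forall_mem_pair, mem_compl, he, false_or]
        exact and_congr_right fun h => by grind [hsame h he]
  rw [← sum_filter_add_sum_filter_not G.edgeFinset (fun e => ∀ v ∈ e, v ∈ B), hcompl,
    sum_insert (by simp [edgesInside, hrB]), edgesInside]
  abel

section Tree

variable {A : Finset V} {r s : V}

lemma Preconnected.separatingEdges_nonempty (hG : G.Preconnected) {a b : V} (ha : a ∈ A)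
    (hb : b ∈ A) (hab : a ≠ b) : (G.separatingEdges A).Nonempty := by
  obtain ⟨p⟩ := hG a b
  obtain ⟨x, y, hxy, -, rfl, hxa, hyb⟩ :=
    p.bypass_isPath.isTrail.exists_crossing_edge (B := {b}) hab rfl
  exact ⟨s(x, y), mem_separatingEdges_mk.mpr ⟨hxy, ⟨a, ha, hxa⟩, y, hb, .rfl⟩⟩

lemma IsTree.exists_separatingEdge_crossing (hT : G.IsTree)
    (he : s(r, s) ∈ G.separatingEdges A) {a : V} (ha : a ∈ A) {B : Set V} (haB : a ∉ B)
    (hrB : r ∈ B) :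
    ∃ x y, x ∉ B ∧ y ∈ B ∧ s(x, y) ∈ G.separatingEdges A ∧
      (G.deleteEdges {s(x, y)}).Reachable y r := by
  obtain ⟨p⟩ := hT.connected.preconnected a r
  obtain ⟨x, y, hxy, hxB, hyB, hxa, hyr⟩ :=
    p.bypass_isPath.isTrail.exists_crossing_edge haB hrB
  obtain ⟨hadj, ⟨a', ha', hra'⟩, b', hb', hsb'⟩ := mem_separatingEdges_mk.mp he
  have hbridge := isAcyclic_iff_forall_adj_isBridge.mp hT.isAcyclic
  have hsep : ¬ (G.deleteEdges {s(r, s)}).Reachable a' b' := fun h =>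
    hbridge hadj (hra'.trans (h.trans hsb'.symm))
  have hy := (hbridge hxy).reachable_deleteEdges_or_of_reachable hT.connected.preconnected hyr hsep
  refine ⟨x, y, hxB, hyB, mem_separatingEdges_mk.mpr ⟨hxy, ⟨a, ha, hxa⟩, ?_⟩, hyr⟩
  exact hy.elim (fun h => ⟨a', ha', h⟩) fun h => ⟨b', hb', h⟩

variable [Fintype V] {w : Sym2 V → ℝ}

lemma IsTree.sum_edgeFinset_sub_le_sum (hT : G.IsTree) (he : s(r, s) ∈ G.separatingEdges A)
    {R : V → ℝ} (hR : ∀ B : Finset V, B ⊂ univ → ¬ A ⊆ B →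
      ∑ e ∈ G.edgesInside B, w e ≤ ∑ j ∈ B, R j) :
    ∑ e ∈ G.edgeFinset, w e - w s(r, s) ≤ ∑ j, R j := by
  obtain ⟨hadj, ⟨a, ha, hra⟩, b, hb, hsb⟩ := mem_separatingEdges_mk.mp he
  have hbr := isAcyclic_iff_forall_adj_isBridge.mp hT.isAcyclic hadj
  set B := univ.filter fun v => (G.deleteEdges {s(r, s)}).Reachable v r
  have hB : ∀ v, v ∈ B ↔ (G.deleteEdges {s(r, s)}).Reachable v r := by simp [B]
  have hsB : s ∉ B := fun h => hbr ((hB s).mp h).symm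
  have hrB : r ∈ B := (hB r).mpr .rfl
  have hbB : b ∉ B := fun h => hsB ((hB s).mpr (hsb.trans ((hB b).mp h)))
  have haB : a ∈ B := (hB a).mpr hra.symm
  have hin := hR B (ssubset_univ_iff.mpr fun h => hsB (h ▸ mem_univ s)) fun h => hbB (h hb)
  have hout := hR Bᶜ (ssubset_univ_iff.mpr fun h => (mem_compl.mp (h ▸ mem_univ r)) hrB)
    fun h => mem_compl.mp (h ha) haB
  have := hbr.sum_edgesInside_add_sum_edgesInside_compl hadj hB w
  have := sum_add_sum_compl B R
  linarith

lemma IsTree.exists_feasible_sum_eq (hT : G.IsTree) (hw : ∀ e ∈ G.edgeFinset, 0 ≤ w e)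
    (he : s(r, s) ∈ G.separatingEdges A) (hmin : ∀ e ∈ G.separatingEdges A, w s(r, s) ≤ w e) :
    ∃ R : V → ℝ, (∀ j, 0 ≤ R j) ∧
      (∀ B : Finset V, B ⊂ univ → ¬ A ⊆ B → ∑ e ∈ G.edgesInside B, w e ≤ ∑ j ∈ B, R j) ∧
      ∑ j, R j = ∑ e ∈ G.edgeFinset, w e - w s(r, s) := by
  choose near hnear_mem hnear_reach using
    hT.connected.preconnected.exists_mem_reachable_deleteEdges r
  set D := G.edgeFinset.erase s(r, s)
  have hwD : ∀ e ∈ D, 0 ≤ w e := fun e he => hw e (mem_of_mem_erase he)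
  refine ⟨fun j => ∑ e ∈ D with near e = j, w e,
    fun j => sum_nonneg fun e he => hwD e (mem_filter.mp he).1, fun B _ hAB => ?_,
    (sum_fiberwise D near w).trans (sum_erase_eq_sub (mem_edgeFinset.mpr he.1))⟩
  rw [sum_fiberwise_eq_sum_filter D B near w]
  refine sum_le_sum_of_erase_subset (a := s(r, s)) ?_
    (fun e he => hwD e (mem_filter.mp he).1) ?_
  · intro e he
    obtain ⟨hne, he⟩ := mem_erase.mp he
    obtain ⟨he, hB⟩ := mem_filter.mp he
    exact mem_filter.mpr ⟨mem_erase.mpr ⟨hne, he⟩, hB _ (hnear_mem e)⟩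
  · intro hin
    obtain ⟨a, ha, haB⟩ := not_subset.mp hAB
    have hrB : r ∈ B := (mem_filter.mp hin).2 r (Sym2.mem_mk_left r s)
    obtain ⟨x, y, hxB, hyB, hxy, hyr⟩ :=
      hT.exists_separatingEdge_crossing he ha (B := B) haB hrB
    have hf : s(x, y) ∉ G.edgesInside B := fun h =>
      hxB ((mem_filter.mp h).2 x (Sym2.mem_mk_left x y))
    have hnear : near s(x, y) = y :=
      hT.isAcyclic.eq_of_mem_of_reachable_deleteEdges hxy.1 (hnear_mem _) (hnear_reach _) hyr
    refine ⟨s(x, y), mem_filter.mpr ⟨mem_erase.mpr ⟨(ne_of_mem_of_not_mem hin hf).symm,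
      mem_edgeFinset.mpr hxy.1⟩, by rwa [hnear]⟩, hf, hmin _ hxy⟩

end Tree

end SimpleGraph

theorem stmt_5_general {V : Type*} [Fintype V] (G : SimpleGraph V) (hT : G.IsTree)
    (w : Sym2 V → ℝ) (hw : ∀ e ∈ G.edgeFinset, 0 ≤ w e)
    (A : Finset V) (hA : 2 ≤ A.card)
    (EA : Set (Sym2 V))
    (hEA : EA = {e : Sym2 V | e ∈ G.edgeSet ∧
      ∀ v ∈ e, ∃ a ∈ A, (G.deleteEdges {e}).Reachable v a}) :
    (∀ R : V → ℝ, (∀ j, 0 ≤ R j) →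
      (∀ B : Finset V, B ⊂ Finset.univ → ¬ A ⊆ B →
        ∑ e ∈ G.edgeFinset.filter (fun e => ∀ v ∈ e, v ∈ B), w e ≤ ∑ j ∈ B, R j) →
      (∑ e ∈ G.edgeFinset, w e) - sInf (w '' EA) ≤ ∑ j, R j) ∧
    (∃ R : V → ℝ, (∀ j, 0 ≤ R j) ∧
      (∀ B : Finset V, B ⊂ Finset.univ → ¬ A ⊆ B →
        ∑ e ∈ G.edgeFinset.filter (fun e => ∀ v ∈ e, v ∈ B), w e ≤ ∑ j ∈ B, R j) ∧
      ∑ j, R j = (∑ e ∈ G.edgeFinset, w e) - sInf (w '' EA)) := by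
  change EA = G.separatingEdges A at hEA
  subst hEA
  obtain ⟨a, ha, b, hb, hab⟩ := Finset.one_lt_card.mp hA
  obtain ⟨e, he, hmin⟩ := (G.separatingEdges A).exists_min_image w (Set.toFinite _)
    (hT.connected.preconnected.separatingEdges_nonempty ha hb hab)
  rw [(show IsLeast (w '' G.separatingEdges A) (w e) from
    ⟨Set.mem_image_of_mem w he, Set.forall_mem_image.mpr hmin⟩).csInf_eq]
  induction e using Sym2.ind with
  | _ r s => exact ⟨fun R _ hR => hT.sum_edgeFinset_sub_le_sum he hR,
      hT.exists_feasible_sum_eq hw he hmin⟩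

/-- Let `G = (M, E)` be a finite tree with `|M| ≥ 2` and nonnegative edge
weights `w`, let `A ⊆ M` with `|A| ≥ 2`, and let `E_A` be the set of edges `e ∈ E` such that
each of the two connected components of `G` with `e` deleted contains a vertex of `A`.
Then the minimum of `∑_{j ∈ M} R j` over all `A`-feasible vectors `R` equals
`∑_{e ∈ E} w e − min_{e ∈ E_A} w e`: every `A`-feasible `R` satisfies the corresponding lower
bound, and some `A`-feasible `R` attains this value. -/
theorem stmt_5 {V : Type*} [Fintype V] (G : SimpleGraph V) (hT : G.IsTree)
    (hcard : 2 ≤ Fintype.card V)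
    (w : Sym2 V → ℝ) (hw : ∀ e ∈ G.edgeFinset, 0 ≤ w e)
    (A : Finset V) (hA : 2 ≤ A.card)
    (EA : Set (Sym2 V))
    (hEA : EA = {e : Sym2 V | e ∈ G.edgeSet ∧
      ∀ v ∈ e, ∃ a ∈ A, (G.deleteEdges {e}).Reachable v a}) :
    (∀ R : V → ℝ, (∀ j, 0 ≤ R j) →
      (∀ B : Finset V, B ⊂ Finset.univ → ¬ A ⊆ B →
        ∑ e ∈ G.edgeFinset.filter (fun e => ∀ v ∈ e, v ∈ B), w e ≤ ∑ j ∈ B, R j) →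
      (∑ e ∈ G.edgeFinset, w e) - sInf (w '' EA) ≤ ∑ j, R j) ∧
    (∃ R : V → ℝ, (∀ j, 0 ≤ R j) ∧
      (∀ B : Finset V, B ⊂ Finset.univ → ¬ A ⊆ B →
        ∑ e ∈ G.edgeFinset.filter (fun e => ∀ v ∈ e, v ∈ B), w e ≤ ∑ j ∈ B, R j) ∧
      ∑ j, R j = (∑ e ∈ G.edgeFinset, w e) - sInf (w '' EA)) :=
  stmt_5_general G hT w hw A hA EA hEA
end

section
/- Let M be a finite set with |M| ≥ 2, let w assign a nonnegative weight w_{ij} to each unordered pair {i,j} of distinct elements of M, and let A ⊆ M. Suppose R : M → ℝ is A-feasible. Then for every partition P of M into k ≥ 2 nonempty parts, each of which contains an element of A, one has Σ_{j∈M} R_j ≥ Σ_{all pairs {i,j}} w_{ij} − (1/(k−1)) · Σ_{pairs {i,j} crossing P} w_{ij}, where a pair {i,j} crosses P if i and j lie in different parts of P. -/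
open scoped Classical

/-!
Apply feasibility to the complement `pᶜ` of every part `p` (a proper subset missing the
elements of `A` in `p`) and add up the `k` inequalities. Every `R j` is counted `k - 1`
times. A pair inside one part lies inside `k - 1` of the complements, a crossing pair
inside at least `k - 2`; hence `(k - 1) · ∑ R ≥ (k - 1) · ∑ w - ∑_{crossing} w`.
-/

open Finset

section

variable {V : Type*} [Fintype V]

noncomputable def pairsWithin (B : Finset V) : Finset (Sym2 V) :=
  univ.filter fun e => ¬ e.IsDiag ∧ ∀ v ∈ e, v ∈ B

noncomputable def crossingPairs (P : Finset (Finset V)) : Finset (Sym2 V) :=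
  univ.filter fun e =>
    ∃ x y : V, e = s(x, y) ∧ ∃ p ∈ P, ∃ q ∈ P, p ≠ q ∧ x ∈ p ∧ y ∈ q

lemma sum_sum_compl_eq_card_sub_one_mul {β : Type*} [CommRing β] {P : Finset (Finset V)}
    (hdisj : (P : Set (Finset V)).PairwiseDisjoint id) (hcover : ∀ v, ∃ p ∈ P, v ∈ p)
    (f : V → β) :
    ∑ p ∈ P, ∑ j ∈ pᶜ, f j = (#P - 1) * ∑ j, f j := by
  have hunion : P.biUnion id = univ :=
    eq_univ_of_forall fun v => mem_biUnion.2 (hcover v)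
  have hparts : ∑ p ∈ P, ∑ j ∈ p, f j = ∑ j, f j := by
    rw [← hunion, sum_biUnion hdisj]
    rfl
  rw [sum_congr rfl fun p _ => eq_sub_of_add_eq (sum_compl_add_sum p f), sum_sub_distrib,
    sum_const, hparts, nsmul_eq_mul]
  ring

lemma sum_sum_pairsWithin_compl {β : Type*} [AddCommMonoid β] (P : Finset (Finset V))
    (w : Sym2 V → β) :
    ∑ p ∈ P, ∑ e ∈ pairsWithin pᶜ, w e
      = ∑ e ∈ univ.filter (fun e : Sym2 V => ¬ e.IsDiag),
          #{p ∈ P | ∀ v ∈ e, v ∉ p} • w e := by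
  set D := univ.filter fun e : Sym2 V => ¬ e.IsDiag
  have hwithin (p : Finset V) : pairsWithin pᶜ = D.filter fun e => ∀ v ∈ e, v ∉ p := by
    simp only [D, pairsWithin, filter_filter, mem_compl]
  calc ∑ p ∈ P, ∑ e ∈ pairsWithin pᶜ, w e
      = ∑ p ∈ P, ∑ e ∈ D, if ∀ v ∈ e, v ∉ p then w e else 0 :=
        sum_congr rfl fun p _ => by rw [hwithin, sum_filter]
    _ = ∑ e ∈ D, ∑ p ∈ P, if ∀ v ∈ e, v ∉ p then w e else 0 := sum_comm
    _ = _ := sum_congr rfl fun e _ => by rw [← sum_filter, sum_const]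

lemma card_le_card_filter_avoiding_add {P : Finset (Finset V)}
    (hdisj : (P : Set (Finset V)).PairwiseDisjoint id) (hcover : ∀ v, ∃ p ∈ P, v ∈ p)
    (e : Sym2 V) :
    #P ≤ #{p ∈ P | ∀ v ∈ e, v ∉ p} + if e ∈ crossingPairs P then 2 else 1 := by
  induction e using Sym2.ind with | _ x y => ?_
  obtain ⟨px, hpx, hxp⟩ := hcover x
  obtain ⟨py, hpy, hyp⟩ := hcover y
  have hmeet : {p ∈ P | ¬ ∀ v ∈ s(x, y), v ∉ p} ⊆ {px, py} := by
    intro p hp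
    simp only [mem_filter, Sym2.mem_iff, forall_eq_or_imp, forall_eq, not_and_or,
      not_not] at hp
    obtain ⟨hpP, hxp' | hyp'⟩ := hp
    · simp [hdisj.elim_finset hpP hpx x hxp' hxp]
    · simp [hdisj.elim_finset hpP hpy y hyp' hyp]
  rw [← card_filter_add_card_filter_not (fun p => ∀ v ∈ s(x, y), v ∉ p)]
  gcongr
  split_ifs with hcross
  · exact (card_le_card hmeet).trans card_le_two
  · obtain rfl : px = py := by
      by_contra hne
      exact hcross (mem_filter.2 ⟨mem_univ _, x, y, rfl, px, hpx, py, hpy, hne, hxp, hyp⟩)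
    simpa using card_le_card hmeet

lemma crossingPairs_subset_offDiag {P : Finset (Finset V)}
    (hdisj : (P : Set (Finset V)).PairwiseDisjoint id) :
    crossingPairs P ⊆ univ.filter fun e : Sym2 V => ¬ e.IsDiag := by
  intro e he
  obtain ⟨x, y, rfl, p, hp, q, hq, hpq, hxp, hyq⟩ := (mem_filter.1 he).2
  refine mem_filter.2 ⟨mem_univ _, fun hxy => hpq ?_⟩
  rw [Sym2.mk_isDiag_iff] at hxy
  exact hdisj.elim_finset hp hq x hxp (hxy ▸ hyq)

lemma card_sub_one_mul_sum_sub_sum_crossingPairs_le {P : Finset (Finset V)}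
    (hdisj : (P : Set (Finset V)).PairwiseDisjoint id) (hcover : ∀ v, ∃ p ∈ P, v ∈ p)
    (w : Sym2 V → ℝ) (hw : ∀ e : Sym2 V, ¬ e.IsDiag → 0 ≤ w e) :
    (#P - 1 : ℝ) * ∑ e ∈ univ.filter (fun e : Sym2 V => ¬ e.IsDiag), w e
        - ∑ e ∈ crossingPairs P, w e
      ≤ ∑ p ∈ P, ∑ e ∈ pairsWithin pᶜ, w e := by
  rw [sum_sum_pairsWithin_compl, ← inter_eq_right.2 (crossingPairs_subset_offDiag hdisj),
    ← sum_ite_mem, mul_sum, ← sum_sub_distrib]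
  refine sum_le_sum fun e he => ?_
  have hwe := hw e (mem_filter.1 he).2
  have hcount :
      (#P : ℝ) ≤ #{p ∈ P | ∀ v ∈ e, v ∉ p} + if e ∈ crossingPairs P then 2 else 1 :=
    mod_cast card_le_card_filter_avoiding_add hdisj hcover e
  rw [nsmul_eq_mul]
  split_ifs at hcount ⊢ <;> nlinarith

end

theorem stmt_6_general {V : Type*} [Fintype V]
    (w : Sym2 V → ℝ) (hw : ∀ e : Sym2 V, ¬ e.IsDiag → 0 ≤ w e)
    (A : Finset V)
    (R : V → ℝ)
    (hfeas : ∀ B : Finset V, B ⊂ Finset.univ → ¬ A ⊆ B →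
      ∑ e ∈ Finset.univ.filter (fun e : Sym2 V => ¬ e.IsDiag ∧ ∀ v ∈ e, v ∈ B), w e
        ≤ ∑ j ∈ B, R j)
    (P : Finset (Finset V)) (hk : 2 ≤ P.card)
    (hdisj : ∀ p ∈ P, ∀ q ∈ P, p ≠ q → Disjoint p q)
    (hcover : ∀ v : V, ∃ p ∈ P, v ∈ p)
    (hAP : ∀ p ∈ P, ∃ a ∈ A, a ∈ p) :
    (∑ e ∈ Finset.univ.filter (fun e : Sym2 V => ¬ e.IsDiag), w e)
      - (1 / ((P.card : ℝ) - 1)) *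
        ∑ e ∈ Finset.univ.filter (fun e : Sym2 V =>
          ∃ x y : V, e = s(x, y) ∧ ∃ p ∈ P, ∃ q ∈ P, p ≠ q ∧ x ∈ p ∧ y ∈ q), w e
      ≤ ∑ j, R j := by
  have hdisjoint : (P : Set (Finset V)).PairwiseDisjoint id := fun p hp q hq => hdisj p hp q hq
  have hfeas_compl : ∀ p ∈ P, ∑ e ∈ pairsWithin pᶜ, w e ≤ ∑ j ∈ pᶜ, R j := by
    intro p hp
    obtain ⟨a, haA, hap⟩ := hAP p hp
    refine hfeas pᶜ (ssubset_univ_iff.2 fun h => ?_) fun hA => mem_compl.1 (hA haA) hap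
    exact mem_compl.1 (h ▸ mem_univ a) hap
  have hsum : (#P - 1 : ℝ) * ∑ e ∈ univ.filter (fun e : Sym2 V => ¬ e.IsDiag), w e
      - ∑ e ∈ crossingPairs P, w e ≤ (#P - 1) * ∑ j, R j :=
    calc _ ≤ ∑ p ∈ P, ∑ e ∈ pairsWithin pᶜ, w e :=
          card_sub_one_mul_sum_sub_sum_crossingPairs_le hdisjoint hcover w hw
      _ ≤ ∑ p ∈ P, ∑ j ∈ pᶜ, R j := sum_le_sum hfeas_compl
      _ = (#P - 1) * ∑ j, R j := sum_sum_compl_eq_card_sub_one_mul hdisjoint hcover R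
  have hk' : (0 : ℝ) < #P - 1 := by
    have : (2 : ℝ) ≤ #P := by exact_mod_cast hk
    linarith
  rw [crossingPairs] at hsum
  refine le_of_mul_le_mul_left ?_ hk'
  rw [mul_sub, ← mul_assoc, mul_one_div_cancel hk'.ne', one_mul]
  exact hsum

/-- Let `M` be a finite set with `|M| ≥ 2`, let `w` assign a nonnegative
weight to each unordered pair of distinct elements of `M`, and let `A ⊆ M`.  Suppose
`R : M → ℝ` is `A`-feasible.  Then for every partition `P` of `M` into `k ≥ 2` nonempty
parts, each of which contains an element of `A`, one has
`∑_{j ∈ M} R j ≥ ∑_{all pairs} w − (1 / (k − 1)) · ∑_{pairs crossing P} w`,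
where a pair `{i, j}` crosses `P` if `i` and `j` lie in different parts of `P`. -/
theorem stmt_6 {V : Type*} [Fintype V] (hcard : 2 ≤ Fintype.card V)
    (w : Sym2 V → ℝ) (hw : ∀ e : Sym2 V, ¬ e.IsDiag → 0 ≤ w e)
    (A : Finset V)
    (R : V → ℝ) (hR0 : ∀ j, 0 ≤ R j)
    (hfeas : ∀ B : Finset V, B ⊂ Finset.univ → ¬ A ⊆ B →
      ∑ e ∈ Finset.univ.filter (fun e : Sym2 V => ¬ e.IsDiag ∧ ∀ v ∈ e, v ∈ B), w e
        ≤ ∑ j ∈ B, R j)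
    (P : Finset (Finset V)) (hk : 2 ≤ P.card)
    (hne : ∀ p ∈ P, p.Nonempty)
    (hdisj : ∀ p ∈ P, ∀ q ∈ P, p ≠ q → Disjoint p q)
    (hcover : ∀ v : V, ∃ p ∈ P, v ∈ p)
    (hAP : ∀ p ∈ P, ∃ a ∈ A, a ∈ p) :
    (∑ e ∈ Finset.univ.filter (fun e : Sym2 V => ¬ e.IsDiag), w e)
      - (1 / ((P.card : ℝ) - 1)) *
        ∑ e ∈ Finset.univ.filter (fun e : Sym2 V =>
          ∃ x y : V, e = s(x, y) ∧ ∃ p ∈ P, ∃ q ∈ P, p ≠ q ∧ x ∈ p ∧ y ∈ q), w e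
      ≤ ∑ j, R j :=
  stmt_6_general w hw A R hfeas P hk hdisj hcover hAP
end

section
/- Let A, B, C be finite nonempty sets and φ : A → B × C a bijection. Let S and W be random variables on a common finite probability space with S valued in A, and write (K, F) = φ(S). Let U_A be uniformly distributed on A and independent of W, and let U_B be uniformly distributed on B and independent of the pair (F, W). If SD((S, W); (U_A, W)) ≤ δ, then SD((K, F, W); (U_B, F, W)) ≤ 2δ. -/
open scoped Classical

/-- The probability of an event `E` under the probability mass function `p` on a finite
sample space `Ω`. -/
noncomputable def prOf {Ω : Type*} [Fintype Ω] (p : Ω → ℝ) (E : Ω → Prop) : ℝ :=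
  ∑ ω ∈ Finset.univ.filter E, p ω

/-- Statistical distance `SD(X; Y) = (1/2)·∑_w |P[X = w] − P[Y = w]|` between two random
variables `X Y : Ω → 𝒲` on the finite probability space given by `p`. -/
noncomputable def statDist {Ω : Type*} [Fintype Ω] (p : Ω → ℝ) {𝒲 : Type*} [Fintype 𝒲]
    (X Y : Ω → 𝒲) : ℝ :=
  (1 / 2) * ∑ w : 𝒲, |prOf p (fun ω => X ω = w) - prOf p (fun ω => Y ω = w)|

/-! Write `Q = (U_B, F, W)` and let `I(b, c, w) = Pr[W = w] / |A|` be the law of `(U_A, W)` carried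
through `φ`. Since `I` does not depend on `b`, it equals `U_B ⊗ (its (c, w)-marginal)`, so by the
triangle inequality `SD((K, F, W); Q) ≤ SD((K, F, W); I) + SD(U_B ⊗ marg I; U_B ⊗ marg (K, F, W))`,
and the second term is at most the first because taking marginals does not increase the distance. -/

section TvDist

variable {α β γ : Type*} [Fintype α] [Fintype β] [Fintype γ]

noncomputable def tvDist (P Q : α → ℝ) : ℝ :=
  1 / 2 * ∑ x, |P x - Q x|

theorem tvDist_comm (P Q : α → ℝ) : tvDist P Q = tvDist Q P := by
  simp only [tvDist, abs_sub_comm]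

theorem tvDist_triangle (P Q R : α → ℝ) : tvDist P R ≤ tvDist P Q + tvDist Q R := by
  rw [tvDist, tvDist, tvDist, ← mul_add, ← Finset.sum_add_distrib]
  gcongr with x
  exact abs_sub_le _ _ _

theorem tvDist_comp_equiv (e : β ≃ α) (P Q : α → ℝ) : tvDist (P ∘ e) (Q ∘ e) = tvDist P Q := by
  simp only [tvDist, Function.comp_apply, e.sum_comp (fun x => |P x - Q x|)]

theorem tvDist_marginal_le (P Q : β × γ → ℝ) :
    tvDist (fun y => ∑ b, P (b, y)) (fun y => ∑ b, Q (b, y)) ≤ tvDist P Q := by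
  rw [tvDist, tvDist, Fintype.sum_prod_type, Finset.sum_comm]
  gcongr with y
  rw [← Finset.sum_sub_distrib]
  exact Finset.abs_sum_le_sum_abs _ _

theorem tvDist_uniform_prod [Nonempty β] (P Q : γ → ℝ) :
    tvDist (fun y : β × γ => (Fintype.card β : ℝ)⁻¹ * P y.2)
      (fun y => (Fintype.card β : ℝ)⁻¹ * Q y.2) = tvDist P Q := by
  have hβ : (Fintype.card β : ℝ) ≠ 0 := by positivity
  simp only [tvDist, Fintype.sum_prod_type, ← mul_sub, abs_mul, Finset.sum_const,
    Finset.card_univ, nsmul_eq_mul, ← Finset.mul_sum, abs_inv, Nat.abs_cast]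
  rw [inv_mul_cancel_left₀ hβ]

theorem tvDist_uniform_prod_marginal_le [Nonempty β] (P I : β × γ → ℝ)
    (hI : ∀ b b' y, I (b, y) = I (b', y)) :
    tvDist P (fun y => (Fintype.card β : ℝ)⁻¹ * ∑ b, P (b, y.2)) ≤ 2 * tvDist P I := by
  have hI_eq : I = fun y => (Fintype.card β : ℝ)⁻¹ * ∑ b, I (b, y.2) := by
    funext ⟨b, y⟩
    have hβ : (Fintype.card β : ℝ) ≠ 0 := by positivity
    simp only [hI _ b y, Finset.sum_const, Finset.card_univ, nsmul_eq_mul]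
    field_simp
  calc tvDist P (fun y => (Fintype.card β : ℝ)⁻¹ * ∑ b, P (b, y.2))
      ≤ tvDist P I + tvDist I (fun y => (Fintype.card β : ℝ)⁻¹ * ∑ b, P (b, y.2)) :=
        tvDist_triangle _ _ _
    _ = tvDist P I + tvDist (fun y => ∑ b, I (b, y)) (fun y => ∑ b, P (b, y)) := by
        congr 1
        nth_rw 1 [hI_eq]
        exact tvDist_uniform_prod (fun y => ∑ b, I (b, y)) (fun y => ∑ b, P (b, y))
    _ ≤ tvDist P I + tvDist I P := by gcongr; exact tvDist_marginal_le I P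
    _ = 2 * tvDist P I := by rw [tvDist_comm I P]; ring

end TvDist

section Law

variable {Ω α β : Type*} [Fintype Ω] (p : Ω → ℝ)

noncomputable def law (X : Ω → α) (x : α) : ℝ :=
  prOf p (fun ω => X ω = x)

theorem statDist_eq_tvDist_law [Fintype α] (X Y : Ω → α) :
    statDist p X Y = tvDist (law p X) (law p Y) := rfl

theorem prOf_congr {E E' : Ω → Prop} (h : ∀ ω, E ω ↔ E' ω) : prOf p E = prOf p E' := by
  obtain rfl : E = E' := funext fun ω => propext (h ω)
  rfl

theorem law_prodMk_apply (X : Ω → α) (Y : Ω → β) (x : α) (y : β) :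
    law p (fun ω => (X ω, Y ω)) (x, y) = prOf p (fun ω => X ω = x ∧ Y ω = y) :=
  prOf_congr p fun _ => Prod.ext_iff

theorem sum_law_prodMk [Fintype α] (X : Ω → α) (Y : Ω → β) (y : β) :
    ∑ x, law p (fun ω => (X ω, Y ω)) (x, y) = law p Y y := by
  simp only [law, prOf, Finset.sum_filter]
  rw [Finset.sum_comm]
  refine Finset.sum_congr rfl fun ω _ => ?_
  by_cases hy : Y ω = y <;> simp [hy]

theorem law_comp_apply_of_injective {f : α → β} (hf : Function.Injective f) (X : Ω → α)
    (x : α) : law p (f ∘ X) (f x) = law p X x :=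
  prOf_congr p fun _ => hf.eq_iff

end Law

theorem stmt_10_general {Ω : Type*} [Fintype Ω] (p : Ω → ℝ)
    {A B C 𝒲 : Type*} [Fintype A] [Fintype B] [Fintype C] [Fintype 𝒲]
    [Nonempty B]
    (φ : A → B × C) (hφ : Function.Bijective φ)
    (S : Ω → A) (W : Ω → 𝒲) (UA : Ω → A) (UB : Ω → B)
    (hUA : ∀ a, prOf p (fun ω => UA ω = a) = 1 / Fintype.card A)
    (hUAW : ∀ a w, prOf p (fun ω => UA ω = a ∧ W ω = w)
      = prOf p (fun ω => UA ω = a) * prOf p (fun ω => W ω = w))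
    (hUB : ∀ b, prOf p (fun ω => UB ω = b) = 1 / Fintype.card B)
    (hUBFW : ∀ b c w, prOf p (fun ω => UB ω = b ∧ (φ (S ω)).2 = c ∧ W ω = w)
      = prOf p (fun ω => UB ω = b) * prOf p (fun ω => (φ (S ω)).2 = c ∧ W ω = w))
    (δ : ℝ)
    (hSD : statDist p (fun ω => (S ω, W ω)) (fun ω => (UA ω, W ω)) ≤ δ) :
    statDist p (fun ω => ((φ (S ω)).1, (φ (S ω)).2, W ω))
      (fun ω => (UB ω, (φ (S ω)).2, W ω)) ≤ 2 * δ := by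
  set P := law p fun ω => ((φ (S ω)).1, (φ (S ω)).2, W ω)
  let e : A × 𝒲 ≃ B × C × 𝒲 :=
    ((Equiv.ofBijective φ hφ).prodCongr (Equiv.refl 𝒲)).trans (Equiv.prodAssoc B C 𝒲)
  have hlawUB : law p (fun ω => (UB ω, (φ (S ω)).2, W ω))
      = fun y => (Fintype.card B : ℝ)⁻¹ * ∑ b, P (b, y.2) := by
    funext ⟨b, c, w⟩
    rw [sum_law_prodMk, law_prodMk_apply, law_prodMk_apply,
      prOf_congr p (E' := fun ω => UB ω = b ∧ (φ (S ω)).2 = c ∧ W ω = w) (by simp),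
      hUBFW, hUB, one_div]
  have hdist_ideal : tvDist P (fun y => law p W y.2.2 / Fintype.card A) ≤ δ := by
    rw [← tvDist_comp_equiv e]
    convert hSD using 1
    congr 1
    · funext x
      exact law_comp_apply_of_injective p e.injective (fun ω => (S ω, W ω)) x
    · funext ⟨a, w⟩
      simp [e, hUAW, hUA, law, div_eq_inv_mul]
  rw [statDist_eq_tvDist_law, hlawUB]
  calc _ ≤ 2 * tvDist P (fun y => law p W y.2.2 / Fintype.card A) :=
        tvDist_uniform_prod_marginal_le P _ fun _ _ _ => rfl
    _ ≤ 2 * δ := by linarith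

/-- Let `A, B, C` be finite nonempty sets and `φ : A → B × C` a bijection.
Let `S` and `W` be random variables on a common finite probability space with `S` valued in
`A`, and write `(K, F) = φ(S)`.  Let `U_A` be uniform on `A` and independent of `W`, and
`U_B` uniform on `B` and independent of `(F, W)`.  If `SD((S, W); (U_A, W)) ≤ δ`, then
`SD((K, F, W); (U_B, F, W)) ≤ 2δ`. -/
theorem stmt_10 {Ω : Type*} [Fintype Ω] (p : Ω → ℝ)
    (hp0 : ∀ ω, 0 ≤ p ω) (hp1 : ∑ ω, p ω = 1)
    {A B C 𝒲 : Type*} [Fintype A] [Fintype B] [Fintype C] [Fintype 𝒲]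
    [Nonempty A] [Nonempty B] [Nonempty C]
    (φ : A → B × C) (hφ : Function.Bijective φ)
    (S : Ω → A) (W : Ω → 𝒲) (UA : Ω → A) (UB : Ω → B)
    (hUA : ∀ a, prOf p (fun ω => UA ω = a) = 1 / Fintype.card A)
    (hUAW : ∀ a w, prOf p (fun ω => UA ω = a ∧ W ω = w)
      = prOf p (fun ω => UA ω = a) * prOf p (fun ω => W ω = w))
    (hUB : ∀ b, prOf p (fun ω => UB ω = b) = 1 / Fintype.card B)
    (hUBFW : ∀ b c w, prOf p (fun ω => UB ω = b ∧ (φ (S ω)).2 = c ∧ W ω = w)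
      = prOf p (fun ω => UB ω = b) * prOf p (fun ω => (φ (S ω)).2 = c ∧ W ω = w))
    (δ : ℝ)
    (hSD : statDist p (fun ω => (S ω, W ω)) (fun ω => (UA ω, W ω)) ≤ δ) :
    statDist p (fun ω => ((φ (S ω)).1, (φ (S ω)).2, W ω))
      (fun ω => (UB ω, (φ (S ω)).2, W ω)) ≤ 2 * δ :=
  stmt_10_general p φ hφ S W UA UB hUA hUAW hUB hUBFW δ hSD
end
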